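/- Let f: ℝ → ℝ satisfy f(x) ≥ 0 for x ≥ 0 and liminf_{x→∞} f(x)/x^γ > 0 for some γ > 0. Let X be a nonnegative random variable and g: [0,∞) → [0,∞) a nonincreasing function such that, for some constants c > 0, t0 > 0 and some β ∈ (0, γ/4), one has P(X > t − 1) ≥ c·t^{−β} and g(t) ≥ c·t^{−β} for all t ≥ t0. Then for every a > 0 and every u ≥ 0, E[ f(a·√(X + 1)) · g(u + X) ] = ∞. -/

import Mathlib

open MeasureTheory ProbabilityTheory Filter Set
open scoped ENNReal Classical

noncomputable section

namespace DynkinGame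

variable {Ω : Type*} [MeasurableSpace Ω]

/-- The σ-algebra generated by the process `W` up to time `t` (natural filtration). -/
def natFilt (W : ℝ → Ω → ℝ) (t : ℝ) : MeasurableSpace Ω :=
  ⨆ s ∈ Set.Icc (0 : ℝ) t, MeasurableSpace.comap (W s) inferInstance

/-- The σ-algebra generated by the whole process `W`. -/
def processSigma (W : ℝ → Ω → ℝ) : MeasurableSpace Ω :=
  ⨆ s ∈ Set.Ici (0 : ℝ), MeasurableSpace.comap (W s) inferInstance

/-- `W` is a standard Brownian motion started at `0` under `P`:
measurable marginals, `W 0 = 0`, a.s. continuous paths, Gaussian increments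
`W t - W s ∼ N(0, t - s)`, and increments independent of the past. -/
structure IsBM (P : Measure Ω) (W : ℝ → Ω → ℝ) : Prop where
  meas : ∀ t, Measurable (W t)
  init : ∀ ω, W 0 ω = 0
  cont : ∀ᵐ ω ∂P, Continuous fun t => W t ω
  incr : ∀ s t : ℝ, 0 ≤ s → s ≤ t →
    Measure.map (fun ω => W t ω - W s ω) P = gaussianReal 0 (Real.toNNReal (t - s))
  indep_incr : ∀ s t : ℝ, 0 ≤ s → s ≤ t →
    Indep (MeasurableSpace.comap (fun ω => W t ω - W s ω) inferInstance) (natFilt W s) P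

/-- `τ`, with values in `[0, ∞]`, is a stopping time for the natural filtration of `W`. -/
def IsStopTime (W : ℝ → Ω → ℝ) (τ : Ω → ℝ≥0∞) : Prop :=
  ∀ t : ℝ, 0 ≤ t → MeasurableSet[natFilt W t] {ω | τ ω ≤ ENNReal.ofReal t}

/-- The value of the process at the (possibly infinite) random time `τ`
(irrelevant junk value `W 0 ω` on `{τ = ∞}`). -/
def stopVal (W : ℝ → Ω → ℝ) (τ : Ω → ℝ≥0∞) (ω : Ω) : ℝ :=
  W (τ ω).toReal ω

/-- Extended-real expectation `E[X] = E[X⁺] - E[X⁻]`. -/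
def EE (P : Measure Ω) (X : Ω → ℝ) : EReal :=
  ((∫⁻ ω, ENNReal.ofReal (X ω) ∂P : ℝ≥0∞) : EReal)
    - ((∫⁻ ω, ENNReal.ofReal (-X ω) ∂P : ℝ≥0∞) : EReal)

/-- `E[X]` is well defined (not of the form `∞ - ∞`). -/
def WellDef (P : Measure Ω) (X : Ω → ℝ) : Prop :=
  (∫⁻ ω, ENNReal.ofReal (X ω) ∂P) ≠ ⊤ ∨ (∫⁻ ω, ENNReal.ofReal (-X ω) ∂P) ≠ ⊤

/-- Admissible strategies of a player observing `W` with starting point `x`: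
stopping times of `W` for which `E[f(x + W_τ)]` is well defined. -/
def Adm (P : Measure Ω) (f : ℝ → ℝ) (x : ℝ) (W : ℝ → Ω → ℝ) (τ : Ω → ℝ≥0∞) : Prop :=
  IsStopTime W τ ∧ WellDef P fun ω => f (x + stopVal W τ ω)

/-- The pathwise payoff `f(x + W_τ) (1_{τ < σ} + (1/2) 1_{τ = σ < ∞})` of a player stopping
at `τ` when the opponent stops at `σ`. -/
def payoff (f : ℝ → ℝ) (x : ℝ) (W : ℝ → Ω → ℝ) (τ σ : Ω → ℝ≥0∞) (ω : Ω) : ℝ :=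
  f (x + stopVal W τ ω) *
    ((if τ ω < σ ω then 1 else 0) + (if τ ω = σ ω ∧ τ ω ≠ ⊤ then (1 : ℝ) / 2 else 0))

/-- The expected payoff of a player using `τ` against `σ`. -/
def J (P : Measure Ω) (f : ℝ → ℝ) (x : ℝ) (W : ℝ → Ω → ℝ) (τ σ : Ω → ℝ≥0∞) : EReal :=
  EE P (payoff f x W τ σ)

/-- Nash equilibrium of the two-player stopping game started at `(x₁, x₂)`. -/
def Nash (P : Measure Ω) (f : ℝ → ℝ) (x₁ x₂ : ℝ) (W₁ W₂ : ℝ → Ω → ℝ)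
    (τ₁ τ₂ : Ω → ℝ≥0∞) : Prop :=
  Adm P f x₁ W₁ τ₁ ∧ Adm P f x₂ W₂ τ₂ ∧
  (∀ σ, Adm P f x₁ W₁ σ → J P f x₁ W₁ σ τ₂ ≤ J P f x₁ W₁ τ₁ τ₂) ∧
  (∀ σ, Adm P f x₂ W₂ σ → J P f x₂ W₂ σ τ₁ ≤ J P f x₂ W₂ τ₂ τ₁)

/-- The discount function `c(t) = P(σ > t) + (1/2) P(σ = t < ∞)`, `c(∞) = 0`, induced by the
opponent's stopping time `σ`. -/
def disc (P : Measure Ω) (σ : Ω → ℝ≥0∞) (t : ℝ≥0∞) : ℝ :=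
  if t = ⊤ then 0
  else (P {ω | t < σ ω}).toReal + (1 / 2) * (P {ω | σ ω = t}).toReal

/-- The full two-player setup: a probability measure carrying two independent standard
Brownian motions started at `0`. -/
structure Setup (P : Measure Ω) (W₁ W₂ : ℝ → Ω → ℝ) : Prop where
  prob : IsProbabilityMeasure P
  bm₁ : IsBM P W₁
  bm₂ : IsBM P W₂
  indep : Indep (processSigma W₁) (processSigma W₂) P

/-- Assumption (A1): `f < 0` on `(-∞, 0)` and `f ≥ 0` on `[0, ∞)`. -/
def A1 (f : ℝ → ℝ) : Prop :=
  (∀ x < (0 : ℝ), f x < 0) ∧ ∀ x ≥ (0 : ℝ), 0 ≤ f x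

/-- Assumption (A2) with exponent `γ`: `liminf_{x → ∞} f x / x ^ γ > 0`. -/
def A2 (f : ℝ → ℝ) (γ : ℝ) : Prop :=
  0 < liminf (fun x : ℝ => f x / x ^ γ) atTop

/-- An extended-real payoff value is finite. -/
def FiniteP (v : EReal) : Prop := v ≠ ⊤ ∧ v ≠ ⊥

/-- First nonnegative time at which the (time-dependent) property `A` holds, as an
`ℝ≥0∞`-valued random time (`∞` if it never holds). -/
def hitTime (A : ℝ → Ω → Prop) (ω : Ω) : ℝ≥0∞ :=
  sInf (ENNReal.ofReal '' {t : ℝ | 0 ≤ t ∧ A t ω})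

/-- The first time after the hitting time of the origin at which `x + W` lies above the
square-root boundary `a √(s - σ + 1)`, where `σ` is the hitting time of the origin. -/
def sqrtBdryTime (W : ℝ → Ω → ℝ) (x a : ℝ) (ω : Ω) : ℝ≥0∞ :=
  sInf (ENNReal.ofReal ''
    {s : ℝ | 0 ≤ s ∧ hitTime (fun t ω' => x + W t ω' = 0) ω ≤ ENNReal.ofReal s ∧
      a * Real.sqrt (s - (hitTime (fun t ω' => x + W t ω' = 0) ω).toReal + 1) ≤ x + W s ω})

end DynkinGame

/-!
On the event `{X > t - 1}` the integrand is at least of order `t ^ (γ/2 - β)`: the liminf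
condition gives `f(a √(X+1)) ≳ (X+1) ^ (γ/2)`, and `g(u + X) ≳ (X+1) ^ (-β)`. This event has
probability `≳ t ^ (-β)`, so the expectation is `≳ t ^ (γ/2 - 2β)` for every large `t`, which
is unbounded because `β < γ/4`.
-/

open scoped Topology

namespace DynkinGame

lemma exists_pos_eventually_lt_of_liminf_pos {ι : Type*} {l : Filter ι} {u : ι → ℝ}
    (h : 0 < liminf u l) : ∃ ε > 0, ∀ᶠ x in l, ε < u x := by
  have hbdd : l.IsBoundedUnder (· ≥ ·) u := by
    by_contra hbdd
    simp [Real.liminf_of_not_isBoundedUnder hbdd] at h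
  exact ⟨_, half_pos h, eventually_lt_of_lt_liminf (half_lt_self h) hbdd⟩

lemma exists_pos_eventually_mul_rpow_le_of_liminf_pos {f : ℝ → ℝ} {γ : ℝ}
    (h : 0 < liminf (fun x => f x / x ^ γ) atTop) :
    ∃ ε > 0, ∀ᶠ x in atTop, ε * x ^ γ ≤ f x := by
  obtain ⟨ε, hε, hf⟩ := exists_pos_eventually_lt_of_liminf_pos h
  refine ⟨ε, hε, ?_⟩
  filter_upwards [hf, eventually_gt_atTop 0] with x hx hx0
  exact (le_div_iff₀ (Real.rpow_pos_of_pos hx0 γ)).1 hx.le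

lemma eventually_rpow_le_comp_sqrt_mul_comp_add {f g : ℝ → ℝ} {ε γ c β a u : ℝ}
    (hε : 0 < ε) (hf : ∀ᶠ x in atTop, ε * x ^ γ ≤ f x)
    (hc : 0 < c) (hβ : 0 ≤ β) (hg : ∀ᶠ t in atTop, c * t ^ (-β) ≤ g t)
    (ha : 0 < a) (hu : 0 ≤ u) :
    ∀ᶠ y in atTop, ε * a ^ γ * c * (u + 1) ^ (-β) * (y + 1) ^ (γ / 2 - β) ≤
      f (a * √(y + 1)) * g (u + y) := by
  have hsqrt : Tendsto (fun y => a * √(y + 1)) atTop atTop :=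
    (Real.tendsto_sqrt_atTop.comp (tendsto_atTop_add_const_right _ 1 tendsto_id)).const_mul_atTop ha
  have hshift : Tendsto (fun y => u + y) atTop atTop := tendsto_atTop_add_const_left _ u tendsto_id
  filter_upwards [hsqrt.eventually hf, hshift.eventually hg, eventually_gt_atTop 0]
    with y hfy hgy hy
  have hpow : (a * √(y + 1)) ^ γ = a ^ γ * (y + 1) ^ (γ / 2) := by
    rw [Real.mul_rpow ha.le (Real.sqrt_nonneg _), Real.sqrt_eq_rpow, ← Real.rpow_mul (by linarith),
      one_div_mul_eq_div]
  have hf' : ε * a ^ γ * (y + 1) ^ (γ / 2) ≤ f (a * √(y + 1)) := by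
    rwa [hpow, ← mul_assoc] at hfy
  have hg' : c * (u + 1) ^ (-β) * (y + 1) ^ (-β) ≤ g (u + y) :=
    calc c * (u + 1) ^ (-β) * (y + 1) ^ (-β) = c * ((u + 1) * (y + 1)) ^ (-β) := by
          rw [Real.mul_rpow (by linarith : (0 : ℝ) ≤ u + 1) (by linarith : (0 : ℝ) ≤ y + 1),
            mul_assoc]
      _ ≤ c * (u + y) ^ (-β) := mul_le_mul_of_nonneg_left
          (Real.rpow_le_rpow_of_nonpos (by linarith) (by nlinarith) (by linarith)) hc.le
      _ ≤ g (u + y) := hgy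
  calc _ = (ε * a ^ γ * (y + 1) ^ (γ / 2)) * (c * (u + 1) ^ (-β) * (y + 1) ^ (-β)) := by
        rw [sub_eq_add_neg, Real.rpow_add (by linarith)]
        ring
    _ ≤ _ := mul_le_mul hf' hg' (by positivity) ((by positivity : (0 : ℝ) ≤ _).trans hf')

lemma ofReal_mul_measure_le_lintegral {Ω : Type*} [MeasurableSpace Ω] {μ : Measure Ω}
    {F : Ω → ℝ} {A : Set Ω} (hA : MeasurableSet A) {q : ℝ} (hq : ∀ ω ∈ A, q ≤ F ω) :
    ENNReal.ofReal q * μ A ≤ ∫⁻ ω, ENNReal.ofReal (F ω) ∂μ := by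
  rw [← lintegral_indicator_const hA]
  exact lintegral_mono (Set.indicator_le fun ω hω => ENNReal.ofReal_le_ofReal (hq ω hω))

lemma lintegral_ofReal_comp_eq_top {Ω : Type*} [MeasurableSpace Ω] {μ : Measure Ω}
    {X : Ω → ℝ} (hX : Measurable X) {h : ℝ → ℝ} {K c β δ : ℝ}
    (hK : 0 < K) (hc : 0 < c) (hδ : 0 ≤ δ) (hβδ : β < δ)
    (hh : ∀ᶠ y in atTop, K * (y + 1) ^ δ ≤ h y)
    (htail : ∀ᶠ t in atTop, c * t ^ (-β) ≤ (μ {ω | t - 1 < X ω}).toReal) :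
    ∫⁻ ω, ENNReal.ofReal (h (X ω)) ∂μ = ⊤ := by
  obtain ⟨y₀, hy₀⟩ := eventually_atTop.1 hh
  have hbound : ∀ᶠ t in atTop,
      ENNReal.ofReal (K * c * t ^ (δ - β)) ≤ ∫⁻ ω, ENNReal.ofReal (h (X ω)) ∂μ := by
    filter_upwards [htail, eventually_ge_atTop (y₀ + 1), eventually_gt_atTop 0] with t ht hty ht0
    have hlarge : ∀ ω ∈ {ω | t - 1 < X ω}, K * t ^ δ ≤ h (X ω) := fun ω hω =>
      calc K * t ^ δ ≤ K * (X ω + 1) ^ δ := by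
            gcongr
            exact (sub_lt_iff_lt_add.1 hω).le
        _ ≤ h (X ω) := hy₀ _ (by linarith [hω.out])
    calc ENNReal.ofReal (K * c * t ^ (δ - β))
        = ENNReal.ofReal (K * t ^ δ) * ENNReal.ofReal (c * t ^ (-β)) := by
          rw [← ENNReal.ofReal_mul (by positivity), sub_eq_add_neg, Real.rpow_add ht0]
          ring_nf
      _ ≤ ENNReal.ofReal (K * t ^ δ) * μ {ω | t - 1 < X ω} := by
          gcongr
          exact ENNReal.ofReal_le_of_le_toReal ht
      _ ≤ _ := ofReal_mul_measure_le_lintegral (measurableSet_lt measurable_const hX) hlarge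
  have hlim : Tendsto (fun t => ENNReal.ofReal (K * c * t ^ (δ - β))) atTop (𝓝 ⊤) :=
    ENNReal.tendsto_ofReal_atTop.comp
      ((tendsto_rpow_atTop (by linarith)).const_mul_atTop (by positivity))
  exact top_le_iff.1 (le_of_tendsto hlim hbound)

lemma EE_eq_top_of_nonneg {Ω : Type*} [MeasurableSpace Ω] {P : Measure Ω} {Y : Ω → ℝ}
    (hY : ∀ ω, 0 ≤ Y ω) (htop : ∫⁻ ω, ENNReal.ofReal (Y ω) ∂P = ⊤) : EE P Y = ⊤ := by
  have hneg : ∫⁻ ω, ENNReal.ofReal (-Y ω) ∂P = 0 := by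
    simp [ENNReal.ofReal_eq_zero.2 (neg_nonpos.2 (hY _))]
  simp [EE, htop, hneg]

theorem expectation_of_sqrt_boundary_payoff_infinite_general
    {Ω : Type*} [MeasurableSpace Ω] (P : Measure Ω)
    (f : ℝ → ℝ) (hf0 : ∀ x ≥ (0 : ℝ), 0 ≤ f x)
    (γ : ℝ) (hliminf : 0 < liminf (fun x : ℝ => f x / x ^ γ) atTop)
    (X : Ω → ℝ) (hX : Measurable X) (hX0 : ∀ ω, 0 ≤ X ω)
    (g : ℝ → ℝ) (hg0 : ∀ t ≥ (0 : ℝ), 0 ≤ g t)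
    (c t₀ β : ℝ) (hc : 0 < c) (hβ : 0 < β) (hβγ : β < γ / 4)
    (htail : ∀ t ≥ t₀, c * t ^ (-β) ≤ (P {ω | t - 1 < X ω}).toReal)
    (hgt : ∀ t ≥ t₀, c * t ^ (-β) ≤ g t)
    (a u : ℝ) (ha : 0 < a) (hu : 0 ≤ u) :
    EE P (fun ω => f (a * Real.sqrt (X ω + 1)) * g (u + X ω)) = ⊤ := by
  obtain ⟨ε, hε, hfε⟩ := exists_pos_eventually_mul_rpow_le_of_liminf_pos hliminf
  have hpayoff := eventually_rpow_le_comp_sqrt_mul_comp_add hε hfε hc hβ.le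
    (eventually_atTop.2 ⟨t₀, hgt⟩) ha hu
  refine EE_eq_top_of_nonneg (fun ω => mul_nonneg (hf0 _ (by positivity))
    (hg0 _ (by linarith [hX0 ω]))) ?_
  exact lintegral_ofReal_comp_eq_top hX (by positivity) hc (by linarith) (by linarith) hpayoff
    (eventually_atTop.2 ⟨t₀, htail⟩)

/-- if `f ≥ 0` on `[0, ∞)` with `liminf_{x→∞} f x / x^γ > 0`, `X ≥ 0` is a
random variable and `g` a nonincreasing nonnegative function such that both
`P(X > t - 1)` and `g(t)` dominate `c t^{-β}` for large `t`, where `0 < β < γ/4`, then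
`E[f(a √(X+1)) g(u + X)] = ∞` for every `a > 0`, `u ≥ 0`. -/
theorem expectation_of_sqrt_boundary_payoff_infinite
    {Ω : Type*} [MeasurableSpace Ω] (P : Measure Ω) [IsProbabilityMeasure P]
    (f : ℝ → ℝ) (hf : Measurable f) (hf0 : ∀ x ≥ (0 : ℝ), 0 ≤ f x)
    (γ : ℝ) (hγ : 0 < γ) (hliminf : 0 < liminf (fun x : ℝ => f x / x ^ γ) atTop)
    (X : Ω → ℝ) (hX : Measurable X) (hX0 : ∀ ω, 0 ≤ X ω)
    (g : ℝ → ℝ) (hg : AntitoneOn g (Set.Ici 0)) (hg0 : ∀ t ≥ (0 : ℝ), 0 ≤ g t)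
    (c t₀ β : ℝ) (hc : 0 < c) (ht₀ : 0 < t₀) (hβ : 0 < β) (hβγ : β < γ / 4)
    (htail : ∀ t ≥ t₀, c * t ^ (-β) ≤ (P {ω | t - 1 < X ω}).toReal)
    (hgt : ∀ t ≥ t₀, c * t ^ (-β) ≤ g t)
    (a u : ℝ) (ha : 0 < a) (hu : 0 ≤ u) :
    EE P (fun ω => f (a * Real.sqrt (X ω + 1)) * g (u + X ω)) = ⊤ :=
  expectation_of_sqrt_boundary_payoff_infinite_general P f hf0 γ hliminf X hX hX0 g hg0 c t₀ β hc hβ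
    hβγ htail hgt a u ha hu

end DynkinGame
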